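/- Let σ ∈ [0,1). Then there exists λ > 0 such that σ(1 + λ²) + (1 − σ)·φ(λ) < 1, where φ(λ) = √(2/π) ∫_λ^∞ (x − λ)² exp(−x²/2) dx. (Consequently, for a nonzero x₀ ∈ ℝ^d with |supp x₀| < d, the uniform weight λ·(1,…,1) achieves a strictly smaller value of the normalized expected squared distance to the scaled subdifferential than the zero weight.) -/

import Mathlib

open MeasureTheory ProbabilityTheory
open scoped Pointwise BigOperators

noncomputable section

/-- `phi t = sqrt(2/pi) * int_t^infty (x-t)^2 exp(-x^2/2) dx`. -/
def phi (t : ℝ) : ℝ :=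
  Real.sqrt (2 / Real.pi) * ∫ x in Set.Ioi t, (x - t) ^ 2 * Real.exp (-x ^ 2 / 2)

open Real Filter Set Topology

/-! Expanding `(x - λ)²` and integrating by parts gives
`φ(λ) = √(2/π) ((1 + λ²) ∫_λ^∞ e^{-x²/2} dx - λ e^{-λ²/2})`, and `√(2/π) ∫_0^∞ e^{-x²/2} dx = 1`
then yields `φ(λ) ≤ 1 + λ² - √(2/π) λ e^{-λ²/2}` for `λ ≥ 0`. Hence the quantity to bound is at
most `1 + λ (λ - (1 - σ) √(2/π) e^{-λ²/2})`, and the bracket is negative for small `λ`. -/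

theorem integral_Ioi_deriv_eq_neg_of_integrable {E : Type*} [NormedAddCommGroup E]
    [NormedSpace ℝ E] [CompleteSpace E] {f f' : ℝ → E}
    (hderiv : ∀ x, HasDerivAt f (f' x) x) (hf : Integrable f) (hf' : Integrable f') (a : ℝ) :
    ∫ x in Ioi a, f' x = -f a := by
  rw [← zero_sub]
  exact integral_Ioi_of_hasDerivAt_of_tendsto' (fun x _ => hderiv x) hf'.integrableOn
    (tendsto_zero_of_hasDerivAt_of_integrableOn_Ioi (fun x _ => hderiv x) hf'.integrableOn
      (hf.integrableOn (s := Ioi a)))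

theorem exp_neg_sq_div_two_eq (x : ℝ) : exp (-x ^ 2 / 2) = exp (-(1 / 2) * x ^ 2) := by
  ring_nf

theorem integrable_exp_neg_sq_div_two : Integrable fun x : ℝ => exp (-x ^ 2 / 2) := by
  simpa only [← exp_neg_sq_div_two_eq] using integrable_exp_neg_mul_sq one_half_pos

theorem integrable_mul_exp_neg_sq_div_two : Integrable fun x : ℝ => x * exp (-x ^ 2 / 2) := by
  simpa only [← exp_neg_sq_div_two_eq] using integrable_mul_exp_neg_mul_sq one_half_pos

theorem integrable_sq_mul_exp_neg_sq_div_two :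
    Integrable fun x : ℝ => x ^ 2 * exp (-x ^ 2 / 2) := by
  simpa only [← exp_neg_sq_div_two_eq, rpow_two] using
    integrable_rpow_mul_exp_neg_mul_sq one_half_pos (by norm_num : (-1 : ℝ) < 2)

theorem hasDerivAt_exp_neg_sq_div_two (x : ℝ) :
    HasDerivAt (fun y => exp (-y ^ 2 / 2)) (-x * exp (-x ^ 2 / 2)) x := by
  convert (((hasDerivAt_pow 2 x).fun_neg).div_const 2).exp using 1
  ring

theorem integral_Ioi_mul_exp_neg_sq_div_two (a : ℝ) :
    ∫ x in Ioi a, x * exp (-x ^ 2 / 2) = exp (-a ^ 2 / 2) := by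
  have hderiv (x : ℝ) :
      HasDerivAt (fun y => -exp (-y ^ 2 / 2)) (x * exp (-x ^ 2 / 2)) x := by
    simpa using (hasDerivAt_exp_neg_sq_div_two x).fun_neg
  simpa using integral_Ioi_deriv_eq_neg_of_integrable hderiv
    integrable_exp_neg_sq_div_two.neg integrable_mul_exp_neg_sq_div_two a

theorem integral_Ioi_sq_mul_exp_neg_sq_div_two (a : ℝ) :
    ∫ x in Ioi a, x ^ 2 * exp (-x ^ 2 / 2) =
      a * exp (-a ^ 2 / 2) + ∫ x in Ioi a, exp (-x ^ 2 / 2) := by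
  have hderiv (x : ℝ) : HasDerivAt (fun y => -(y * exp (-y ^ 2 / 2)))
      (x ^ 2 * exp (-x ^ 2 / 2) - exp (-x ^ 2 / 2)) x := by
    refine ((hasDerivAt_id' x).fun_mul (hasDerivAt_exp_neg_sq_div_two x)).fun_neg.congr_deriv ?_
    ring
  have h := integral_Ioi_deriv_eq_neg_of_integrable hderiv
    integrable_mul_exp_neg_sq_div_two.neg
    (integrable_sq_mul_exp_neg_sq_div_two.sub integrable_exp_neg_sq_div_two) a
  rw [integral_sub integrable_sq_mul_exp_neg_sq_div_two.integrableOn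
    integrable_exp_neg_sq_div_two.integrableOn, neg_neg] at h
  linarith

theorem sqrt_two_div_pi_mul_integral_Ioi_zero_exp_neg_sq_div_two :
    √(2 / π) * ∫ x in Ioi 0, exp (-x ^ 2 / 2) = 1 := by
  simp_rw [exp_neg_sq_div_two_eq, integral_gaussian_Ioi]
  rw [← mul_div_assoc, ← sqrt_mul (by positivity),
    show 2 / π * (π / (1 / 2)) = 2 ^ 2 by field_simp, sqrt_sq zero_le_two]
  norm_num

theorem phi_eq (l : ℝ) :
    phi l = √(2 / π) *
      ((1 + l ^ 2) * (∫ x in Ioi l, exp (-x ^ 2 / 2)) - l * exp (-l ^ 2 / 2)) := by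
  have hexpand : (fun x => (x - l) ^ 2 * exp (-x ^ 2 / 2)) = fun x =>
      x ^ 2 * exp (-x ^ 2 / 2) - 2 * l * (x * exp (-x ^ 2 / 2)) + l ^ 2 * exp (-x ^ 2 / 2) := by
    funext x
    ring
  have hsq := integrable_sq_mul_exp_neg_sq_div_two.integrableOn (s := Ioi l)
  have hlin := (integrable_mul_exp_neg_sq_div_two.const_mul (2 * l)).integrableOn (s := Ioi l)
  have hconst := (integrable_exp_neg_sq_div_two.const_mul (l ^ 2)).integrableOn (s := Ioi l)
  rw [phi, hexpand, integral_add (by exact hsq.sub hlin) hconst, integral_sub hsq hlin,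
    integral_const_mul, integral_const_mul, integral_Ioi_sq_mul_exp_neg_sq_div_two,
    integral_Ioi_mul_exp_neg_sq_div_two]
  ring

theorem phi_le (l : ℝ) (hl : 0 ≤ l) :
    phi l ≤ 1 + l ^ 2 - √(2 / π) * l * exp (-l ^ 2 / 2) := by
  have htail : ∫ x in Ioi l, exp (-x ^ 2 / 2) ≤ ∫ x in Ioi 0, exp (-x ^ 2 / 2) :=
    setIntegral_mono_set integrable_exp_neg_sq_div_two.integrableOn
      (Eventually.of_forall fun x => (exp_pos _).le) (Ioi_subset_Ioi hl).eventuallyLE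
  calc phi l = √(2 / π) *
        ((1 + l ^ 2) * (∫ x in Ioi l, exp (-x ^ 2 / 2)) - l * exp (-l ^ 2 / 2)) := phi_eq l
    _ ≤ √(2 / π) *
        ((1 + l ^ 2) * (∫ x in Ioi 0, exp (-x ^ 2 / 2)) - l * exp (-l ^ 2 / 2)) := by gcongr
    _ = 1 + l ^ 2 - √(2 / π) * l * exp (-l ^ 2 / 2) := by
      rw [mul_sub, mul_left_comm, sqrt_two_div_pi_mul_integral_Ioi_zero_exp_neg_sq_div_two]
      ring

theorem exists_uniform_weight_better_than_zero_general (σ : ℝ) (h₁ : σ < 1) :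
    ∃ l : ℝ, 0 < l ∧ σ * (1 + l ^ 2) + (1 - σ) * phi l < 1 := by
  set c := (1 - σ) * √(2 / π)
  have hc : 0 < c := mul_pos (sub_pos.mpr h₁) (sqrt_pos.mpr (by positivity))
  have hsmall : ∀ᶠ l in 𝓝 0, l < c * exp (-l ^ 2 / 2) :=
    continuousAt_id.eventually_lt (by fun_prop) (by simpa using hc)
  obtain ⟨l, hl, hlc⟩ := (eventually_mem_nhdsWithin.and
    (nhdsWithin_le_nhds hsmall : ∀ᶠ l in 𝓝[>] (0 : ℝ), _)).exists
  refine ⟨l, hl, ?_⟩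
  have hgain : l * (l - c * exp (-l ^ 2 / 2)) < 0 := mul_neg_of_pos_of_neg hl (by linarith)
  calc σ * (1 + l ^ 2) + (1 - σ) * phi l
      ≤ σ * (1 + l ^ 2) + (1 - σ) * (1 + l ^ 2 - √(2 / π) * l * exp (-l ^ 2 / 2)) := by
        gcongr
        exact phi_le l hl.le
    _ = 1 + l * (l - c * exp (-l ^ 2 / 2)) := by ring
    _ < 1 := by linarith

theorem exists_uniform_weight_better_than_zero (σ : ℝ) (h₀ : 0 ≤ σ) (h₁ : σ < 1) :
    ∃ l : ℝ, 0 < l ∧ σ * (1 + l ^ 2) + (1 - σ) * phi l < 1 :=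
  exists_uniform_weight_better_than_zero_general σ h₁

end
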